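/- arXiv:1309.6233 — 3 statements merged into one kernel-verified Lean document; each statement's English description precedes it below -/
import Mathlib

section
/- (Classification of homogeneous average-free q-valued harmonic functions in the plane) Suppose u = (u_1,...,u_q) ∈ C^{1;q}(R^2) is average-free, each u_l is harmonic on R^2 ∖ ([0,∞)×{0}), the components match cyclically across the slit, and u is homogeneous of some degree σ > 0. Then σ = k/q for some integer k ≥ 1 with q not dividing k, and u_l(r e^{iθ}) = Re(c r^{k/q} e^{i (k/q)(θ + 2(l-1)π)}) for r ≥ 0, θ ∈ [0,2π), l = 1,...,q, for some constant c ∈ C. In particular if additionally u ∈ C^{1;q} (so σ ≥ 1 with σ ≠ 1 forced by average-freeness for C^1 regularity at 0), then σ ≥ 1 + 1/q. -/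
open Set Complex
open scoped BigOperators Real Topology

noncomputable section

/-- The positive slit `[0,∞) × {0} ⊆ ℝ² = ℂ`. -/
def slitPC : Set ℂ := {z | z.im = 0 ∧ 0 ≤ z.re}

/-- The negative slit `(-∞,0] × {0} ⊆ ℝ² = ℂ`. -/
def slitMC : Set ℂ := {z | z.im = 0 ∧ z.re ≤ 0}

/-- `q`-valued `C^k` regularity (`C^{k;q}(Ω)`) on a planar domain `Ω ⊆ ℝ² = ℂ`: each `u_l`
is `C^k` off the positive slit; there is a cyclically relabelled tuple `v` (`v_l = u_l` on
the lower half-plane, `v_l = u_{l+1}` on the upper half-plane) that is `C^k` off the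
negative slit, encoding the cyclic matching of all derivatives up to order `k` across the
slit; and each `u_l` admits one-sided `C^k` extensions to the closed half-planes. -/
def IsCkqC (q : ℕ) [NeZero q] (k : ℕ∞) (Ω : Set ℂ) (u : Fin q → ℂ → ℝ) : Prop :=
  (∀ l, ContDiffOn ℝ k (u l) (Ω \ slitPC)) ∧
  (∃ v : Fin q → ℂ → ℝ,
    (∀ l, ContDiffOn ℝ k (v l) (Ω \ slitMC)) ∧
    (∀ l, ∀ z ∈ Ω, z.im < 0 → v l z = u l z) ∧
    (∀ l, ∀ z ∈ Ω, 0 < z.im → v l z = u (l + 1) z)) ∧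
  (∃ U L : Fin q → ℂ → ℝ,
    (∀ l, ContDiffOn ℝ k (U l) (Ω ∩ {z | 0 ≤ z.im})) ∧
    (∀ l, ContDiffOn ℝ k (L l) (Ω ∩ {z | z.im ≤ 0})) ∧
    (∀ l, ∀ z ∈ Ω, 0 < z.im → U l z = u l z) ∧
    (∀ l, ∀ z ∈ Ω, z.im < 0 → L l z = u l z))

/-!
For harmonic `f`, the complex gradient `∂ₓf - i ∂ᵧf` is holomorphic off the slit, and homogeneity
of degree `σ` makes it homogeneous of degree `σ - 1`. Along the unit circle it therefore solves
`ψ' = i (σ - 1) ψ`, so it equals `A e^{i(σ-1)θ}`, and Euler's identity `σ f = Re (z (∂ₓf - i ∂ᵧf))`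
gives `f (r e^{iθ}) = r^σ Re (A/σ e^{iσθ})` on each sheet. Continuity of the first derivatives of
the relabelled tuple across the positive axis gives `A_{l+1} = e^{2πiσ} A_l`; going once around
all `q` sheets forces `e^{2πiqσ} = 1`, i.e. `qσ = k ∈ ℕ`. If `q ∣ k` all sheets coincide and the
vanishing average kills `u`; if `σ < 1` the growth `r^σ` along rays contradicts the `C¹`
extension of `u_0` to the closed upper half-plane at `0`. Hence `k > q`.
-/

open Filter Asymptotics InnerProductSpace Laplacian

theorem exists_eq_mul_exp_of_hasDerivAt {g : ℝ → ℂ} {c : ℂ} {a b : ℝ}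
    (hg : ∀ t ∈ Ioo a b, HasDerivAt g (c * g t) t) :
    ∃ A : ℂ, ∀ t ∈ Ioo a b, g t = A * exp (c * t) := by
  have hconst : ∀ t ∈ Ioo a b, HasDerivAt (fun s : ℝ => g s * exp (-c * s)) 0 t := by
    intro t ht
    have hexp : HasDerivAt (fun s : ℝ => exp (-c * s)) (exp (-c * t) * -c) t :=
      ((hasDerivAt_id' (t : ℂ)).const_mul (-c)).cexp.comp_ofReal.congr_deriv (by ring)
    exact ((hg t ht).fun_mul hexp).congr_deriv (by ring)
  obtain ⟨A, hA⟩ := isOpen_Ioo.exists_is_const_of_deriv_eq_zero isPreconnected_Ioo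
    (fun t ht => (hconst t ht).differentiableAt.differentiableWithinAt)
    (fun t ht => (hconst t ht).deriv)
  refine ⟨A, fun t ht => ?_⟩
  rw [← hA t ht, mul_assoc, ← Complex.exp_add]
  simp

theorem eq_zero_of_re_mul_exp_eq_zero {w : ℂ} {s a b : ℝ} (hs : s ≠ 0) (hab : a < b)
    (h : ∀ θ ∈ Ioo a b, (w * exp (s * I * θ)).re = 0) : w = 0 := by
  obtain ⟨θ₀, hθ₀⟩ := nonempty_Ioo.2 hab
  set W := w * exp (s * I * θ₀)
  have hderiv : HasDerivAt (fun θ : ℝ => (w * exp (s * I * θ)).re) (W * (s * I)).re θ₀ := by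
    have hcurve : HasDerivAt (fun θ : ℝ => w * exp (s * I * θ)) (W * (s * I)) θ₀ :=
      (((hasDerivAt_id' (θ₀ : ℂ)).const_mul (s * I)).cexp.comp_ofReal.const_mul w).congr_deriv
        (by simp only [W]; ring)
    exact reCLM.hasFDerivAt.comp_hasDerivAt θ₀ hcurve
  have hzero : (fun θ : ℝ => (w * exp (s * I * θ)).re) =ᶠ[𝓝 θ₀] fun _ => 0 :=
    eventually_of_mem (isOpen_Ioo.mem_nhds hθ₀) h
  have him : W.im = 0 := by
    have := hderiv.deriv.symm.trans (hzero.deriv_eq.trans (deriv_const θ₀ 0))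
    simpa [mul_re, hs] using this
  have hW : W = 0 := Complex.ext (h θ₀ hθ₀) him
  simpa [W, Complex.exp_ne_zero] using hW

theorem tendsto_rpow_nhdsGT_zero {y : ℝ} (hy : 0 < y) :
    Tendsto (fun t : ℝ => t ^ y) (𝓝[>] 0) (𝓝 0) := by
  simpa [Real.zero_rpow hy.ne'] using
    ((Real.continuousAt_rpow_const 0 y (Or.inr hy.le)).tendsto).mono_left nhdsWithin_le_nhds

theorem eq_zero_of_differentiableWithinAt_of_rpow {E : Type*} [NormedAddCommGroup E]
    [NormedSpace ℝ E] {U : E → ℝ} {s : Set E} {e : E} {σ b : ℝ} (hσ₀ : 0 < σ) (hσ₁ : σ < 1)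
    (hU : DifferentiableWithinAt ℝ U s 0) (hs : ∀ t : ℝ, 0 < t → t • e ∈ s)
    (hray : ∀ t : ℝ, 0 < t → U (t • e) = t ^ σ * b) : b = 0 := by
  have hray_tendsto : Tendsto (fun t : ℝ => t • e) (𝓝[>] 0) (𝓝[s] 0) := by
    refine tendsto_nhdsWithin_iff.2 ⟨?_, eventually_mem_nhdsWithin.mono hs⟩
    exact ((show Continuous fun t : ℝ => t • e by fun_prop).tendsto' 0 0 (zero_smul ℝ e)).mono_left
      nhdsWithin_le_nhds
  have hlin : (fun t : ℝ => t • e) =O[𝓝[>] 0] fun t => t :=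
    isBigO_of_le' _ fun t => by rw [norm_smul, mul_comm]
  have hO : (fun t : ℝ => t ^ σ * b - U 0) =O[𝓝[>] 0] fun t => t := by
    refine (((hU.hasFDerivWithinAt.isBigO_sub.comp_tendsto hray_tendsto).trans ?_).congr' ?_
      EventuallyEq.rfl)
    · simpa [Function.comp_def] using hlin
    · filter_upwards [self_mem_nhdsWithin] with t ht using by simp [hray t ht]
  have hid : Tendsto (fun t : ℝ => t) (𝓝[>] 0) (𝓝 0) := tendsto_nhdsWithin_of_tendsto_nhds
    (continuous_id.tendsto 0)
  have hU0 : U 0 = 0 := by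
    have hlim := ((tendsto_rpow_nhdsGT_zero hσ₀).mul_const b).sub_const (U 0)
    simpa [eq_comm] using tendsto_nhds_unique (hO.trans_tendsto hid) hlim
  have hb : (fun _ : ℝ => b) =O[𝓝[>] 0] fun t => t ^ (1 - σ) := by
    refine ((isBigO_refl (fun t : ℝ => t ^ (-σ)) _).mul (by simpa [hU0] using hO)).congr' ?_ ?_
    all_goals filter_upwards [self_mem_nhdsWithin] with t (ht : 0 < t)
    · rw [← mul_assoc, ← Real.rpow_add ht, neg_add_cancel, Real.rpow_zero, one_mul]
    · rw [sub_eq_neg_add, Real.rpow_add ht, Real.rpow_one]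
  exact tendsto_const_nhds_iff.1 (hb.trans_tendsto (tendsto_rpow_nhdsGT_zero (sub_pos.2 hσ₁)))

section
open Fin.NatCast

theorem Fin.apply_natCast_eq_mul_pow {M : Type*} [Monoid M] {n : ℕ} [NeZero n] {A : Fin n → M}
    {E : M} (h : ∀ l, A (l + 1) = A l * E) (m : ℕ) : A m = A 0 * E ^ m := by
  induction m with
  | zero => simp
  | succ m ih => rw [Nat.cast_succ, h, ih, pow_succ, mul_assoc]

theorem Fin.apply_eq_mul_pow {M : Type*} [Monoid M] {n : ℕ} [NeZero n] {A : Fin n → M}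
    {E : M} (h : ∀ l, A (l + 1) = A l * E) (l : Fin n) : A l = A 0 * E ^ (l : ℕ) := by
  simpa using Fin.apply_natCast_eq_mul_pow h l

theorem Fin.apply_zero_eq_mul_pow {M : Type*} [Monoid M] {n : ℕ} [NeZero n] {A : Fin n → M}
    {E : M} (h : ∀ l, A (l + 1) = A l * E) : A 0 = A 0 * E ^ n := by
  simpa using Fin.apply_natCast_eq_mul_pow h n

end

theorem isClosed_slitPC : IsClosed slitPC :=
  (isClosed_eq continuous_im continuous_const).inter (isClosed_le continuous_const continuous_re)

theorem isClosed_slitMC : IsClosed slitMC :=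
  (isClosed_eq continuous_im continuous_const).inter (isClosed_le continuous_re continuous_const)

theorem smul_notMem_slitPC {t : ℝ} (ht : 0 < t) {z : ℂ} (hz : z ∉ slitPC) : t • z ∉ slitPC := by
  rintro ⟨him, hre⟩
  refine hz ⟨?_, ?_⟩
  · simpa [ht.ne'] using him
  · simpa [smul_re, mul_nonneg_iff_of_pos_left ht] using hre

theorem exp_mul_I_notMem_slitPC {θ : ℝ} (hθ : θ ∈ Ioo 0 (2 * π)) : exp (θ * I) ∉ slitPC := by
  rintro ⟨him, hre⟩
  rw [exp_ofReal_mul_I_im] at him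
  rw [exp_ofReal_mul_I_re] at hre
  have hπ : θ - π = 0 := by
    refine (Real.sin_eq_zero_iff_of_lt_of_lt ?_ ?_).1 ?_
    · linarith [hθ.1]
    · linarith [hθ.2]
    · rw [Real.sin_sub_pi, him, neg_zero]
  rw [sub_eq_zero.1 hπ, Real.cos_pi] at hre
  norm_num at hre

theorem exists_eq_mul_exp_of_notMem_slitPC {z : ℂ} (hz : z ∉ slitPC) :
    ∃ r θ : ℝ, 0 < r ∧ θ ∈ Ioo 0 (2 * π) ∧ z = r * exp (θ * I) := by
  have hz0 : z ≠ 0 := by rintro rfl; exact hz ⟨rfl, le_rfl⟩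
  have harg : arg z ≠ 0 := fun h => hz (arg_eq_zero_iff.1 h).symm
  have hpolar := (norm_mul_exp_arg_mul_I z).symm
  rcases harg.lt_or_gt with hneg | hpos
  · refine ⟨‖z‖, arg z + 2 * π, norm_pos_iff.2 hz0,
      ⟨by linarith [neg_pi_lt_arg z], by linarith⟩, ?_⟩
    rwa [ofReal_add, add_mul, Complex.exp_add, ofReal_mul, ofReal_ofNat, exp_two_pi_mul_I, mul_one]
  · exact ⟨‖z‖, arg z, norm_pos_iff.2 hz0, ⟨hpos, by linarith [arg_le_pi z, Real.pi_pos]⟩, hpolar⟩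

-- `2 ∂f/∂z`, spelled as in `HarmonicAt.differentiableAt_complex_partial` so that it applies as is.
def complexPartial (f : ℂ → ℝ) (z : ℂ) : ℂ := fderiv ℝ f z 1 - I * fderiv ℝ f z I

theorem re_complexPartial_mul (f : ℂ → ℝ) (z w : ℂ) :
    (complexPartial f z * w).re = fderiv ℝ f z w := by
  have hw : fderiv ℝ f z w = w.re * fderiv ℝ f z 1 + w.im * fderiv ℝ f z I := by
    conv_lhs => rw [show w = w.re • (1 : ℂ) + w.im • I by simp [real_smul]]
    rw [map_add, map_smul, map_smul, smul_eq_mul, smul_eq_mul]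
  simp [complexPartial, hw, mul_re]
  ring

theorem laplacian_eq_fderiv_fderiv_add {f : ℂ → ℝ} {z : ℂ} (hf : ContDiffAt ℝ 2 f z) :
    Δ f z = fderiv ℝ (fun w => fderiv ℝ f w 1) z 1 + fderiv ℝ (fun w => fderiv ℝ f w I) z I := by
  have hdiff : DifferentiableAt ℝ (fderiv ℝ f) z :=
    (hf.fderiv_right (m := 1) (by norm_num)).differentiableAt one_ne_zero
  rw [laplacian_eq_iteratedFDeriv_complexPlane]
  simp [iteratedFDeriv_two_apply, fderiv_clm_apply hdiff (differentiableAt_const _)]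

theorem harmonicOnNhd_of_fderiv_fderiv_add {f : ℂ → ℝ} {s : Set ℂ} (hs : IsOpen s)
    (hf : ContDiffOn ℝ 2 f s)
    (hΔ : ∀ z ∈ s, fderiv ℝ (fun w => fderiv ℝ f w 1) z 1 +
      fderiv ℝ (fun w => fderiv ℝ f w I) z I = 0) :
    HarmonicOnNhd f s := fun _ hz =>
  ⟨hf.contDiffAt (hs.mem_nhds hz), eventually_of_mem (hs.mem_nhds hz) fun w hw =>
    (laplacian_eq_fderiv_fderiv_add (hf.contDiffAt (hs.mem_nhds hw))).trans (hΔ w hw)⟩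

theorem fderiv_smul_of_homogeneous {E : Type*} [NormedAddCommGroup E] [NormedSpace ℝ E]
    {f : E → ℝ} {σ t : ℝ} {z : E} (ht : 0 < t) (hz : DifferentiableAt ℝ f z)
    (htz : DifferentiableAt ℝ f (t • z)) (hhom : ∀ᶠ y in 𝓝 z, f (t • y) = t ^ σ * f y) :
    fderiv ℝ f (t • z) = t ^ (σ - 1) • fderiv ℝ f z := by
  have hcomp : HasFDerivAt (fun y => f (t • y)) (t • fderiv ℝ f (t • z)) z :=
    (htz.hasFDerivAt.comp z ((hasFDerivAt_id z).const_smul t)).congr_fderiv (by ext; simp)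
  have hscaled : HasFDerivAt (fun y => f (t • y)) (t ^ σ • fderiv ℝ f z) z :=
    (hz.hasFDerivAt.const_mul (t ^ σ)).congr_of_eventuallyEq hhom
  rw [Real.rpow_sub_one ht.ne', div_eq_inv_mul, mul_smul, ← hcomp.unique hscaled,
    inv_smul_smul₀ ht.ne']

theorem fderiv_apply_self_of_homogeneous {E F : Type*} [NormedAddCommGroup E] [NormedSpace ℝ E]
    [NormedAddCommGroup F] [NormedSpace ℝ F] {g : E → F} {z : E} {p : ℝ}
    (hg : DifferentiableAt ℝ g z) (hhom : ∀ᶠ t in 𝓝 (1 : ℝ), g (t • z) = t ^ p • g z) :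
    fderiv ℝ g z z = p • g z := by
  have hray : HasDerivAt (fun t : ℝ => g (t • z)) (fderiv ℝ g z z) 1 := by
    have hline : HasDerivAt (fun t : ℝ => t • z) z 1 := by
      simpa using (hasDerivAt_id (1 : ℝ)).smul_const z
    exact (by simpa using hg.hasFDerivAt : HasFDerivAt g (fderiv ℝ g z) ((1 : ℝ) • z))
      |>.comp_hasDerivAt 1 hline
  have hpow : HasDerivAt (fun t : ℝ => t ^ p • g z) (p • g z) 1 := by
    simpa using (Real.hasDerivAt_rpow_const (p := p) (Or.inl one_ne_zero)).smul_const (g z)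
  exact hray.unique (hpow.congr_of_eventuallyEq hhom)

section Sheet

variable {f : ℂ → ℝ} {σ : ℝ}

theorem complexPartial_smul (hf : HarmonicOnNhd f slitPCᶜ)
    (hhom : ∀ t : ℝ, 0 < t → ∀ z ∉ slitPC, f (t • z) = t ^ σ * f z) {t : ℝ} (ht : 0 < t)
    {z : ℂ} (hz : z ∉ slitPC) :
    complexPartial f (t • z) = t ^ (σ - 1) • complexPartial f z := by
  have hdiff : ∀ w ∉ slitPC, DifferentiableAt ℝ f w := fun w hw =>
    (hf w hw).1.differentiableAt two_ne_zero
  have hfd := fderiv_smul_of_homogeneous ht (hdiff z hz) (hdiff _ (smul_notMem_slitPC ht hz))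
    (eventually_of_mem (isClosed_slitPC.isOpen_compl.mem_nhds hz) (hhom t ht))
  simp only [complexPartial, hfd, FunLike.coe_smul, Pi.smul_apply, smul_eq_mul,
    ofReal_mul, real_smul (x := t ^ (σ - 1))]
  ring

theorem differentiableAt_complexPartial (hf : HarmonicOnNhd f slitPCᶜ) {z : ℂ} (hz : z ∉ slitPC) :
    DifferentiableAt ℂ (complexPartial f) z :=
  HarmonicAt.differentiableAt_complex_partial (hf z hz)

theorem deriv_complexPartial_mul_self (hf : HarmonicOnNhd f slitPCᶜ)
    (hhom : ∀ t : ℝ, 0 < t → ∀ z ∉ slitPC, f (t • z) = t ^ σ * f z) {z : ℂ} (hz : z ∉ slitPC) :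
    deriv (complexPartial f) z * z = (σ - 1) * complexPartial f z := by
  have hd := differentiableAt_complexPartial hf hz
  have heuler := fderiv_apply_self_of_homogeneous (hd.restrictScalars ℝ) (p := σ - 1)
    (by filter_upwards [eventually_gt_nhds one_pos] with t ht
          using complexPartial_smul hf hhom ht hz)
  rw [(hd.hasDerivAt.hasFDerivAt.restrictScalars ℝ).fderiv] at heuler
  simpa [real_smul, mul_comm] using heuler

theorem hasDerivAt_complexPartial_exp_mul_I (hf : HarmonicOnNhd f slitPCᶜ)
    (hhom : ∀ t : ℝ, 0 < t → ∀ z ∉ slitPC, f (t • z) = t ^ σ * f z) {θ : ℝ}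
    (hθ : θ ∈ Ioo 0 (2 * π)) :
    HasDerivAt (fun θ : ℝ => complexPartial f (exp (θ * I)))
      ((σ - 1) * I * complexPartial f (exp (θ * I))) θ := by
  have hz := exp_mul_I_notMem_slitPC hθ
  have hcircle : HasDerivAt (fun θ : ℝ => exp (θ * I)) (exp (θ * I) * I) θ :=
    ((hasDerivAt_id' (θ : ℂ)).mul_const I).cexp.comp_ofReal.congr_deriv (by ring)
  refine ((differentiableAt_complexPartial hf hz).hasDerivAt.comp θ hcircle).congr_deriv ?_
  linear_combination I * deriv_complexPartial_mul_self hf hhom hz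

theorem exists_complexPartial_exp_mul_I_eq (hf : HarmonicOnNhd f slitPCᶜ)
    (hhom : ∀ t : ℝ, 0 < t → ∀ z ∉ slitPC, f (t • z) = t ^ σ * f z) :
    ∃ A : ℂ, ∀ θ ∈ Ioo 0 (2 * π),
      complexPartial f (exp (θ * I)) = A * exp ((σ - 1) * I * θ) :=
  exists_eq_mul_exp_of_hasDerivAt fun _ hθ => hasDerivAt_complexPartial_exp_mul_I hf hhom hθ

theorem apply_mul_exp_mul_I_eq (hf : HarmonicOnNhd f slitPCᶜ)
    (hhom : ∀ t : ℝ, 0 < t → ∀ z ∉ slitPC, f (t • z) = t ^ σ * f z) (hσ : σ ≠ 0) {A : ℂ}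
    (hA : ∀ θ ∈ Ioo 0 (2 * π), complexPartial f (exp (θ * I)) = A * exp ((σ - 1) * I * θ))
    {r θ : ℝ} (hr : 0 < r) (hθ : θ ∈ Ioo 0 (2 * π)) :
    f (r * exp (θ * I)) = r ^ σ * (A / σ * exp (σ * I * θ)).re := by
  have hz := exp_mul_I_notMem_slitPC hθ
  have heuler := fderiv_apply_self_of_homogeneous ((hf _ hz).1.differentiableAt two_ne_zero)
    (p := σ) (by filter_upwards [eventually_gt_nhds one_pos] with t ht using hhom t ht _ hz)
  rw [← re_complexPartial_mul, hA θ hθ, mul_assoc, ← Complex.exp_add, smul_eq_mul] at heuler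
  rw [← real_smul, hhom r hr _ hz, div_mul_eq_mul_div, div_ofReal_re]
  congr 1
  rw [eq_div_iff hσ, mul_comm, ← heuler]
  congr 3
  ring

end Sheet

theorem tendsto_complexPartial_of_eventuallyEq {f v : ℂ → ℝ} {z₀ : ℂ} {l : Filter ℝ}
    {γ : ℝ → ℂ} (hv : ContDiffAt ℝ 1 v z₀) (hγ : Tendsto γ l (𝓝 z₀))
    (hfv : ∀ᶠ t in l, f =ᶠ[𝓝 (γ t)] v) :
    Tendsto (fun t => complexPartial f (γ t)) l (𝓝 (complexPartial v z₀)) := by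
  have hcont : ContinuousAt (complexPartial v) z₀ := by
    have := (hv.fderiv_right (m := 0) (by norm_num)).continuousAt
    unfold complexPartial
    fun_prop
  refine (hcont.tendsto.comp hγ).congr' ?_
  filter_upwards [hfv] with t ht
  simp [complexPartial, ht.fderiv_eq]

theorem eq_mul_exp_of_cyclic_matching {f g v : ℂ → ℝ} {σ : ℝ} {A B : ℂ}
    (hv : ContDiffOn ℝ 1 v slitMCᶜ) (hvf : ∀ z : ℂ, z.im < 0 → v z = f z)
    (hvg : ∀ z : ℂ, 0 < z.im → v z = g z)
    (hfA : ∀ θ ∈ Ioo 0 (2 * π), complexPartial f (exp (θ * I)) = A * exp ((σ - 1) * I * θ))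
    (hgB : ∀ θ ∈ Ioo 0 (2 * π), complexPartial g (exp (θ * I)) = B * exp ((σ - 1) * I * θ)) :
    B = A * exp (2 * π * σ * I) := by
  have hv₁ : ContDiffAt ℝ 1 v 1 :=
    hv.contDiffAt (isClosed_slitMC.isOpen_compl.mem_nhds fun h => by norm_num [slitMC] at h)
  have hcircle : ∀ θ₀ : ℝ, Tendsto (fun θ : ℝ => exp (θ * I)) (𝓝 θ₀) (𝓝 (exp (θ₀ * I))) :=
    fun θ₀ => (by fun_prop : Continuous fun θ : ℝ => exp (θ * I)).tendsto θ₀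
  have hlower : Tendsto (fun θ : ℝ => complexPartial f (exp (θ * I))) (𝓝[<] (2 * π))
      (𝓝 (complexPartial v 1)) := by
    refine tendsto_complexPartial_of_eventuallyEq hv₁
      (by simpa using (hcircle (2 * π)).mono_left nhdsWithin_le_nhds) ?_
    filter_upwards [Ioo_mem_nhdsLT (by linarith [Real.pi_pos] : π < 2 * π)] with θ hθ
    refine eventually_of_mem ((isOpen_lt continuous_im continuous_const).mem_nhds ?_)
      fun z hz => (hvf z hz).symm
    show (exp (θ * I)).im < 0
    rw [exp_ofReal_mul_I_im, ← neg_neg (Real.sin θ), ← Real.sin_sub_pi, neg_lt_zero]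
    exact Real.sin_pos_of_pos_of_lt_pi (by linarith [hθ.1]) (by linarith [hθ.2])
  have hupper : Tendsto (fun θ : ℝ => complexPartial g (exp (θ * I))) (𝓝[>] 0)
      (𝓝 (complexPartial v 1)) := by
    refine tendsto_complexPartial_of_eventuallyEq hv₁
      (by simpa using (hcircle 0).mono_left nhdsWithin_le_nhds) ?_
    filter_upwards [Ioo_mem_nhdsGT Real.pi_pos] with θ hθ
    refine eventually_of_mem ((isOpen_lt continuous_const continuous_im).mem_nhds ?_)
      fun z hz => (hvg z hz).symm
    show 0 < (exp (θ * I)).im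
    rw [exp_ofReal_mul_I_im]
    exact Real.sin_pos_of_pos_of_lt_pi hθ.1 hθ.2
  have hexp : Continuous fun θ : ℝ => exp ((σ - 1) * I * θ) := by fun_prop
  have hA : Tendsto (fun θ : ℝ => A * exp ((σ - 1) * I * θ)) (𝓝[<] (2 * π))
      (𝓝 (A * exp (2 * π * σ * I))) := by
    have hperiod : exp ((σ - 1) * I * (2 * π)) = exp (2 * π * σ * I) := by
      rw [show ((σ : ℂ) - 1) * I * (2 * π) = 2 * π * σ * I - 2 * π * I by ring,
        Complex.exp_sub, exp_two_pi_mul_I, div_one]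
    simpa [hperiod] using ((hexp.tendsto (2 * π)).const_mul A).mono_left nhdsWithin_le_nhds
  have hB : Tendsto (fun θ : ℝ => B * exp ((σ - 1) * I * θ)) (𝓝[>] 0) (𝓝 B) := by
    simpa using ((hexp.tendsto 0).const_mul B).mono_left nhdsWithin_le_nhds
  have h2π : (0 : ℝ) < 2 * π := by positivity
  calc B = complexPartial v 1 := tendsto_nhds_unique hB <| hupper.congr'
        (eventually_of_mem (Ioo_mem_nhdsGT h2π) hgB)
    _ = A * exp (2 * π * σ * I) := tendsto_nhds_unique hlower <| hA.congr'
        (eventually_of_mem (Ioo_mem_nhdsLT h2π) fun θ hθ => (hfA θ hθ).symm)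

theorem exists_polar_formula_of_cyclic {q : ℕ} [NeZero q] {u v : Fin q → ℂ → ℝ} {σ : ℝ}
    (hσ : σ ≠ 0) (hu : ∀ l, HarmonicOnNhd (u l) slitPCᶜ)
    (hhom : ∀ t : ℝ, 0 < t → ∀ l, ∀ z ∉ slitPC, u l (t • z) = t ^ σ * u l z)
    (hv : ∀ l, ContDiffOn ℝ 1 (v l) slitMCᶜ) (hv_lower : ∀ l z, z.im < 0 → v l z = u l z)
    (hv_upper : ∀ l z, 0 < z.im → v l z = u (l + 1) z) (hne : ∃ l, ∃ z ∉ slitPC, u l z ≠ 0) :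
    ∃ c : ℂ, c ≠ 0 ∧ exp (2 * π * σ * I) ^ q = 1 ∧
      ∀ r θ : ℝ, 0 < r → 0 < θ → θ < 2 * π → ∀ l : Fin q,
        u l (r * exp (θ * I)) =
          (c * ((r ^ σ : ℝ) : ℂ) * exp (I * ((σ * (θ + 2 * ((l : ℕ) : ℝ) * π) : ℝ) : ℂ))).re := by
  choose A hA using fun l => exists_complexPartial_exp_mul_I_eq (hu l) (hhom · · l)
  have hpolar := fun l {r θ : ℝ} (hr : 0 < r) (hθ : θ ∈ Ioo 0 (2 * π)) =>
    apply_mul_exp_mul_I_eq (hu l) (hhom · · l) hσ (hA l) hr hθ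
  have hstep : ∀ l, A (l + 1) = A l * exp (2 * π * σ * I) := fun l =>
    eq_mul_exp_of_cyclic_matching (hv l) (hv_lower l) (hv_upper l) (hA l) (hA (l + 1))
  have hA₀ : A 0 ≠ 0 := by
    intro h₀
    obtain ⟨l, z, hz, hne⟩ := hne
    obtain ⟨r, θ, hr, hθ, rfl⟩ := exists_eq_mul_exp_of_notMem_slitPC hz
    simp [hpolar l hr hθ, Fin.apply_eq_mul_pow hstep l, h₀] at hne
  refine ⟨A 0 / σ, div_ne_zero hA₀ (ofReal_ne_zero.2 hσ), ?_, fun r θ hr h₀ h₂π l => ?_⟩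
  · exact (mul_eq_left₀ hA₀).1 (Fin.apply_zero_eq_mul_pow hstep).symm
  · rw [hpolar l hr ⟨h₀, h₂π⟩, Fin.apply_eq_mul_pow hstep l, ← Complex.exp_nat_mul,
      ← re_ofReal_mul, show I * ((σ * (θ + 2 * ((l : ℕ) : ℝ) * π) : ℝ) : ℂ) =
        σ * I * θ + (l : ℕ) * (2 * π * σ * I) by push_cast; ring, Complex.exp_add]
    ring_nf

theorem exists_nat_eq_div_of_exp_pow_eq_one {q : ℕ} (hq : q ≠ 0) {σ : ℝ} (hσ : 0 < σ)
    (h : exp (2 * π * σ * I) ^ q = 1) : ∃ k : ℕ, σ = k / q := by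
  obtain ⟨n, hn⟩ := Complex.exp_eq_one_iff.1 ((Complex.exp_nat_mul _ q).trans h)
  have hqσ : (q : ℝ) * σ = n := by
    have h2πI : 2 * π * I ≠ 0 := by simp [Real.pi_ne_zero, I_ne_zero]
    have : ((q * σ : ℝ) : ℂ) * (2 * π * I) = n * (2 * π * I) := by push_cast; rw [← hn]; ring
    exact_mod_cast mul_right_cancel₀ h2πI this
  lift n to ℕ using by exact_mod_cast hqσ ▸ (by positivity : (0 : ℝ) ≤ q * σ)
  exact ⟨n, by rw [eq_div_iff (by exact_mod_cast hq), mul_comm]; exact_mod_cast hqσ⟩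

theorem not_dvd_of_sum_eq_zero {q : ℕ} [NeZero q] {u : Fin q → ℂ → ℝ} {σ : ℝ} {c : ℂ} {k : ℕ}
    (hσ : σ ≠ 0) (hk : σ = k / q) (hc : c ≠ 0)
    (hu : ∀ r θ : ℝ, 0 < r → 0 < θ → θ < 2 * π → ∀ l : Fin q,
      u l (r * exp (θ * I)) =
        (c * ((r ^ σ : ℝ) : ℂ) * exp (I * ((σ * (θ + 2 * ((l : ℕ) : ℝ) * π) : ℝ) : ℂ))).re)
    (havg : ∀ z ∉ slitPC, ∑ l, u l z = 0) : ¬ q ∣ k := by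
  rintro ⟨j, rfl⟩
  have hσj : σ = j := by
    rw [hk, Nat.cast_mul, mul_div_cancel_left₀ _ (Nat.cast_ne_zero.2 (NeZero.ne q))]
  refine hc (eq_zero_of_re_mul_exp_eq_zero hσ (by positivity : (0 : ℝ) < 2 * π) fun θ hθ => ?_)
  have hsheet : ∀ l : Fin q, u l (exp (θ * I)) = (c * exp (σ * I * θ)).re := fun l => by
    rw [← one_mul (exp _), ← ofReal_one, hu 1 θ one_pos hθ.1 hθ.2 l, Real.one_rpow, ofReal_one,
      mul_one, show I * ((σ * (θ + 2 * ((l : ℕ) : ℝ) * π) : ℝ) : ℂ) =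
        σ * I * θ + (j * l : ℕ) * (2 * π * I) by rw [hσj]; push_cast; ring,
      Complex.exp_add, exp_nat_mul_two_pi_mul_I, mul_one]
  have hsum := havg _ (exp_mul_I_notMem_slitPC hθ)
  simp only [hsheet, Finset.sum_const, Finset.card_univ, Fintype.card_fin, nsmul_eq_mul] at hsum
  exact (mul_eq_zero.1 hsum).resolve_left (Nat.cast_ne_zero.2 (NeZero.ne q))

theorem one_le_of_contDiffOn_upperHalfPlane {f U : ℂ → ℝ} {σ : ℝ} {c : ℂ} (hσ : 0 < σ)
    (hc : c ≠ 0) (hU : ContDiffOn ℝ 1 U {z | 0 ≤ z.im}) (hUf : ∀ z : ℂ, 0 < z.im → U z = f z)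
    (hf : ∀ r θ : ℝ, 0 < r → 0 < θ → θ < π →
      f (r * exp (θ * I)) = (c * ((r ^ σ : ℝ) : ℂ) * exp (I * ((σ * θ : ℝ) : ℂ))).re) :
    1 ≤ σ := by
  by_contra! hσ₁
  refine hc (eq_zero_of_re_mul_exp_eq_zero hσ.ne' Real.pi_pos fun θ hθ => ?_)
  have him : ∀ t : ℝ, 0 < t → 0 < (t • exp (θ * I)).im := fun t ht => by
    rw [smul_im, exp_ofReal_mul_I_im]
    exact mul_pos ht (Real.sin_pos_of_pos_of_lt_pi hθ.1 hθ.2)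
  refine eq_zero_of_differentiableWithinAt_of_rpow hσ hσ₁
    ((hU.differentiableOn one_ne_zero) 0 (by simp)) (fun t ht => (him t ht).le) fun t ht => ?_
  rw [hUf _ (him t ht), real_smul, hf t θ ht hθ.1 hθ.2, mul_comm c, mul_assoc, re_ofReal_mul]
  push_cast
  ring_nf

theorem homogeneous_harmonic_classification_general (q : ℕ) [NeZero q]
    (u : Fin q → ℂ → ℝ) (σ : ℝ) (hσ : 0 < σ)
    (hreg : IsCkqC q 1 Set.univ u)
    (hsm : ∀ l, ContDiffOn ℝ 2 (u l) {z : ℂ | z ∉ slitPC})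
    (hharm : ∀ l, ∀ z ∉ slitPC,
      fderiv ℝ (fun w => fderiv ℝ (u l) w 1) z 1 +
        fderiv ℝ (fun w => fderiv ℝ (u l) w Complex.I) z Complex.I = 0)
    (hhom : ∀ t : ℝ, 0 < t → ∀ l, ∀ z ∉ slitPC, u l (t • z) = t ^ σ * u l z)
    (havg : ∀ z ∉ slitPC, ∑ l, u l z = 0)
    (hne : ∃ l, ∃ z ∉ slitPC, u l z ≠ 0) :
    ∃ k : ℕ, 1 ≤ k ∧ ¬ (q ∣ k) ∧ σ = (k : ℝ) / (q : ℝ) ∧ 1 + 1 / (q : ℝ) ≤ σ ∧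
      ∃ c : ℂ, ∀ r θ : ℝ, 0 < r → 0 < θ → θ < 2 * π → ∀ l : Fin q,
        u l ((r : ℂ) * Complex.exp (((θ : ℝ) : ℂ) * Complex.I)) =
          (c * ((r ^ ((k : ℝ) / (q : ℝ)) : ℝ) : ℂ) *
            Complex.exp (Complex.I *
              ((((k : ℝ) / (q : ℝ)) * (θ + 2 * ((l : ℕ) : ℝ) * π) : ℝ) : ℂ))).re := by
  obtain ⟨-, ⟨v, hv, hv_lower, hv_upper⟩, ⟨U, -, hU, -, hU_upper, -⟩⟩ := hreg
  have hharmonic : ∀ l, HarmonicOnNhd (u l) slitPCᶜ := fun l =>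
    harmonicOnNhd_of_fderiv_fderiv_add isClosed_slitPC.isOpen_compl (hsm l) (hharm l)
  obtain ⟨c, hc, hperiod, hu⟩ := exists_polar_formula_of_cyclic hσ.ne' hharmonic hhom
    (fun l => by simpa [compl_eq_univ_sdiff] using hv l) (fun l z => hv_lower l z trivial)
    (fun l z => hv_upper l z trivial) hne
  obtain ⟨k, hk⟩ := exists_nat_eq_div_of_exp_pow_eq_one (NeZero.ne q) hσ hperiod
  have hndvd := not_dvd_of_sum_eq_zero hσ.ne' hk hc hu havg
  have hσ₁ := one_le_of_contDiffOn_upperHalfPlane hσ hc (by simpa using hU 0)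
    (fun z => hU_upper 0 z trivial) fun r θ hr h₀ hπ => by
      simpa using hu r θ hr h₀ (by linarith [Real.pi_pos]) 0
  have hq : (0 : ℝ) < q := Nat.cast_pos.2 (NeZero.pos q)
  have hqk : q < k := by
    refine lt_of_le_of_ne ?_ fun h => hndvd (h ▸ dvd_refl q)
    rw [hk, le_div_iff₀ hq, one_mul] at hσ₁
    exact_mod_cast hσ₁
  subst hk
  refine ⟨k, by omega, hndvd, rfl, ?_, c, hu⟩
  rw [one_add_div hq.ne', div_le_div_iff_of_pos_right hq]
  exact_mod_cast hqk

/-- Classification of homogeneous average-free `q`-valued harmonic functions in the plane: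
if `u ∈ C^{1;q}(ℝ²)` is average-free, not identically zero, each `u_l` is harmonic off the
slit `[0,∞) × {0}` (with cyclic matching), and `u` is homogeneous of degree `σ > 0`, then
`σ = k/q` for some integer `k ≥ 1` with `q ∤ k`, and
`u_l(r e^{iθ}) = Re(c r^{k/q} e^{i(k/q)(θ + 2lπ)})` (components indexed from `0`) for some
`c ∈ ℂ`; moreover, since `u ∈ C^{1;q}`, necessarily `σ ≥ 1 + 1/q`. -/
theorem homogeneous_harmonic_classification (q : ℕ) [NeZero q] (hq : 2 ≤ q)
    (u : Fin q → ℂ → ℝ) (σ : ℝ) (hσ : 0 < σ)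
    (hreg : IsCkqC q 1 Set.univ u)
    (hsm : ∀ l, ContDiffOn ℝ 2 (u l) {z : ℂ | z ∉ slitPC})
    (hharm : ∀ l, ∀ z ∉ slitPC,
      fderiv ℝ (fun w => fderiv ℝ (u l) w 1) z 1 +
        fderiv ℝ (fun w => fderiv ℝ (u l) w Complex.I) z Complex.I = 0)
    (hhom : ∀ t : ℝ, 0 < t → ∀ l, ∀ z ∉ slitPC, u l (t • z) = t ^ σ * u l z)
    (havg : ∀ z ∉ slitPC, ∑ l, u l z = 0)
    (hne : ∃ l, ∃ z ∉ slitPC, u l z ≠ 0) :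
    ∃ k : ℕ, 1 ≤ k ∧ ¬ (q ∣ k) ∧ σ = (k : ℝ) / (q : ℝ) ∧ 1 + 1 / (q : ℝ) ≤ σ ∧
      ∃ c : ℂ, ∀ r θ : ℝ, 0 < r → 0 < θ → θ < 2 * π → ∀ l : Fin q,
        u l ((r : ℂ) * Complex.exp (((θ : ℝ) : ℂ) * Complex.I)) =
          (c * ((r ^ ((k : ℝ) / (q : ℝ)) : ℝ) : ℂ) *
            Complex.exp (Complex.I *
              ((((k : ℝ) / (q : ℝ)) * (θ + 2 * ((l : ℕ) : ℝ) * π) : ℝ) : ℂ))).re :=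
  homogeneous_harmonic_classification_general q u σ hσ hreg hsm hharm hhom havg hne
end
end

section
/- (Majorant power estimate) Let H_0 ≥ 1, H ≥ 1, p ≥ 2 be an integer, n ≥ 1, and define the polynomial v(ξ) = H_0 ξ + (1/2)H_0 ξ² + Σ_{s=3}^p (1/(s(s-1))) H_0 H^{s-3} ξ^s. Then there is an absolute constant c = 4π²/3 such that for every k with 1 ≤ k ≤ p, the coefficients of the formal power series (ξ + (1+n)v(ξ))^k satisfy: the coefficient of ξ^s is at most c^{k-1}(1+(1+n)H_0)^k times (1 if s = k or s = k+1, and H^{s-k-2}/(s-k)^2 if k+2 ≤ s ≤ p). -/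
open Polynomial

/-- The majorant polynomial `v(ξ) = H₀ ξ + (1/2) H₀ ξ² + ∑_{s=3}^p H₀ H^{s-3} ξ^s / (s(s-1))`. -/
noncomputable def majorantV (p : ℕ) (H0 H : ℝ) : Polynomial ℝ :=
  Polynomial.C H0 * Polynomial.X + Polynomial.C (H0 / 2) * Polynomial.X ^ 2 +
    ∑ s ∈ Finset.Icc 3 p,
      Polynomial.C (H0 * H ^ (s - 3) / ((s : ℝ) * ((s : ℝ) - 1))) * Polynomial.X ^ s

/-!
Write `ξ + (1+n)v(ξ) = ξ·Q(ξ)`. The coefficients of `Q` are nonnegative and bounded by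
`A·g(i)`, where `A = 1 + (1+n)H₀`, `g(0) = g(1) = 1` and `g(i) = H^{i-2}/i²` for `i ≥ 2`; the
coefficient of `ξ^s` in the `k`-th power is the coefficient of `ξ^{s-k}` in `Q^k`. Induction on
`k` bounds these by `c^{k-1} A^k g` as soon as the self-convolution satisfies `g * g ≤ c·g`.
For the latter, the two end terms of `(g * g)(M)` give `2g(M)`, and each inner term is at most
`H^{M-2}/(i²j²) ≤ 2H^{M-2}/M² · (1/i² + 1/j²)` with `i + j = M`, so `∑ 1/i² = π²/6` gives
`g * g ≤ (2 + 2π²/3)·g ≤ (4π²/3)·g`.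
-/

open Finset Real

theorem coeff_pow_succ_le_of_coeff_le {R : Type*} [CommSemiring R] [PartialOrder R]
    [IsOrderedRing R] {Q : R[X]} {g : ℕ → R} {A c : R} (hA : 0 ≤ A) (hc : 0 ≤ c)
    (hQ : ∀ i, 0 ≤ Q.coeff i) (hQg : ∀ i, Q.coeff i ≤ A * g i)
    (hg : ∀ m, ∑ x ∈ antidiagonal m, g x.1 * g x.2 ≤ c * g m) (k m : ℕ) :
    (Q ^ (k + 1)).coeff m ≤ c ^ k * A ^ (k + 1) * g m := by
  induction k generalizing m with
  | zero => simpa using hQg m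
  | succ k ih =>
    have hAg (i : ℕ) : 0 ≤ A * g i := (hQ i).trans (hQg i)
    calc (Q ^ (k + 2)).coeff m
        = ∑ x ∈ antidiagonal m, (Q ^ (k + 1)).coeff x.1 * Q.coeff x.2 := by
          rw [pow_succ, coeff_mul]
      _ ≤ ∑ x ∈ antidiagonal m, (c ^ k * A ^ k * (A * g x.1)) * (A * g x.2) := by
          gcongr with x
          · exact hQ _
          · exact mul_nonneg (by positivity) (hAg _)
          · exact (ih x.1).trans_eq (by ring)
          · exact hQg _
      _ = c ^ k * A ^ (k + 2) * ∑ x ∈ antidiagonal m, g x.1 * g x.2 := by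
          rw [mul_sum]; exact sum_congr rfl fun _ _ ↦ by ring
      _ ≤ c ^ (k + 1) * A ^ (k + 2) * g m := by
          rw [pow_succ c, mul_right_comm _ c, mul_assoc _ c]
          gcongr
          exact hg m

theorem coeff_pow_add_eq_coeff_divX_pow {R : Type*} [CommSemiring R] {P : R[X]}
    (hP : P.coeff 0 = 0) (k m : ℕ) : (P ^ k).coeff (k + m) = (P.divX ^ k).coeff m := by
  conv_lhs => rw [← X_mul_divX_add P, hP, C_0, add_zero, mul_pow, add_comm, coeff_X_pow_mul]

noncomputable def majorantWeight (H : ℝ) (m : ℕ) : ℝ :=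
  if m ≤ 1 then 1 else H ^ (m - 2) / (m : ℝ) ^ 2

namespace majorantWeight

variable {H : ℝ}

theorem zero (H : ℝ) : majorantWeight H 0 = 1 := by simp [majorantWeight]

theorem nonneg (hH : 0 ≤ H) (m : ℕ) : 0 ≤ majorantWeight H m := by
  unfold majorantWeight; split <;> positivity

theorem add_two (H : ℝ) (m : ℕ) : majorantWeight H (m + 2) = H ^ m / ((m : ℝ) + 2) ^ 2 := by
  simp [majorantWeight]

theorem succ_le (hH : 1 ≤ H) (m : ℕ) : majorantWeight H (m + 1) ≤ H ^ m / ((m : ℝ) + 1) ^ 2 := by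
  rcases m with _ | m
  · simp [majorantWeight]
  · rw [add_two, Nat.cast_succ, add_assoc, one_add_one_eq_two]
    gcongr
    exact m.le_succ

end majorantWeight

theorem ite_eq_majorantWeight (H : ℝ) (k m : ℕ) :
    (if k + m ≤ k + 1 then 1 else H ^ (k + m - k - 2) / (((k + m : ℕ) : ℝ) - (k : ℝ)) ^ 2) =
      majorantWeight H m := by
  simp [majorantWeight]

theorem sum_antidiagonal_inv_succ_sq_le (m : ℕ) :
    ∑ x ∈ antidiagonal m, 1 / ((x.1 : ℝ) + 1) ^ 2 ≤ π ^ 2 / 6 := by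
  rw [Nat.sum_antidiagonal_eq_sum_range_succ_mk]
  calc ∑ i ∈ range (m + 1), 1 / ((i : ℝ) + 1) ^ 2
      = ∑ i ∈ range (m + 2), 1 / (i : ℝ) ^ 2 := by simp [sum_range_succ' _ (m + 1)]
    _ ≤ π ^ 2 / 6 := sum_le_hasSum _ (fun _ _ ↦ by positivity) hasSum_zeta_two

theorem inv_sq_mul_inv_sq_le {a b : ℝ} (ha : 0 < a) (hb : 0 < b) :
    1 / (a ^ 2 * b ^ 2) ≤ 2 / (a + b) ^ 2 * (1 / a ^ 2 + 1 / b ^ 2) := by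
  rw [div_le_iff₀ (by positivity)]
  field_simp
  nlinarith [sq_nonneg (a - b)]

theorem sum_antidiagonal_majorantWeight_mul_le {H : ℝ} (hH : 1 ≤ H) (m : ℕ) :
    ∑ x ∈ antidiagonal m, majorantWeight H x.1 * majorantWeight H x.2 ≤
      4 * π ^ 2 / 3 * majorantWeight H m := by
  have hπ : 3 < π := pi_gt_three
  rcases m with _ | _ | m
  · simp [majorantWeight]; nlinarith
  · simp [majorantWeight, Nat.sum_antidiagonal_succ]; nlinarith
  rw [Nat.sum_antidiagonal_succ, Nat.sum_antidiagonal_succ', majorantWeight.add_two]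
  simp only [majorantWeight.zero, one_mul, mul_one]
  have hterm (x : ℕ × ℕ) (hx : x ∈ antidiagonal m) :
      majorantWeight H (x.1 + 1) * majorantWeight H (x.2 + 1) ≤
        H ^ m * (2 / ((m : ℝ) + 2) ^ 2) * (1 / ((x.1 : ℝ) + 1) ^ 2 + 1 / ((x.2 : ℝ) + 1) ^ 2) := by
    have hsum : ((x.1 : ℝ) + 1) + ((x.2 : ℝ) + 1) = m + 2 := by
      rw [← HasAntidiagonal.mem_antidiagonal.mp hx]; push_cast; ring
    calc majorantWeight H (x.1 + 1) * majorantWeight H (x.2 + 1)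
        ≤ H ^ x.1 / ((x.1 : ℝ) + 1) ^ 2 * (H ^ x.2 / ((x.2 : ℝ) + 1) ^ 2) := by
          gcongr
          exacts [majorantWeight.nonneg (by linarith) _, majorantWeight.succ_le hH _,
            majorantWeight.succ_le hH _]
      _ = H ^ m * (1 / (((x.1 : ℝ) + 1) ^ 2 * ((x.2 : ℝ) + 1) ^ 2)) := by
          rw [← HasAntidiagonal.mem_antidiagonal.mp hx, mul_one_div, pow_add, div_mul_div_comm]
      _ ≤ _ := by
          rw [mul_assoc, ← hsum]
          gcongr
          exact inv_sq_mul_inv_sq_le (by positivity) (by positivity)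
  have hζ := sum_antidiagonal_inv_succ_sq_le m
  have hζ' : ∑ x ∈ antidiagonal m, 1 / ((x.2 : ℝ) + 1) ^ 2 ≤ π ^ 2 / 6 := by
    rwa [← Nat.sum_antidiagonal_swap]
  have hmiddle : ∑ x ∈ antidiagonal m, majorantWeight H (x.1 + 1) * majorantWeight H (x.2 + 1) ≤
      2 * π ^ 2 / 3 * (H ^ m / ((m : ℝ) + 2) ^ 2) :=
    calc _ ≤ _ := sum_le_sum hterm
      _ = H ^ m * (2 / ((m : ℝ) + 2) ^ 2) * (∑ x ∈ antidiagonal m, 1 / ((x.1 : ℝ) + 1) ^ 2 +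
            ∑ x ∈ antidiagonal m, 1 / ((x.2 : ℝ) + 1) ^ 2) := by rw [← sum_add_distrib, mul_sum]
      _ ≤ H ^ m * (2 / ((m : ℝ) + 2) ^ 2) * (π ^ 2 / 6 + π ^ 2 / 6) := by gcongr
      _ = _ := by ring
  have hπ2 : 2 * (H ^ m / ((m : ℝ) + 2) ^ 2) ≤ 2 * π ^ 2 / 3 * (H ^ m / ((m : ℝ) + 2) ^ 2) :=
    mul_le_mul_of_nonneg_right (by nlinarith) (by positivity)
  linarith

section majorantV

variable {p : ℕ} {H0 H a : ℝ}

theorem coeff_majorantV_zero : (majorantV p H0 H).coeff 0 = 0 := by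
  simp [majorantV, coeff_X]

theorem coeff_majorantV_add_three (i : ℕ) :
    (majorantV p H0 H).coeff (i + 3) =
      if i + 3 ≤ p then H0 * H ^ i / (((i : ℝ) + 3) * ((i : ℝ) + 2)) else 0 := by
  simp [majorantV, coeff_X_pow, add_sub_assoc]
  norm_num

theorem coeff_majorantV_nonneg (hH0 : 0 ≤ H0) (hH : 0 ≤ H) (i : ℕ) :
    0 ≤ (majorantV p H0 H).coeff i := by
  match i with
  | 0 => simp [coeff_majorantV_zero]
  | 1 => simpa [majorantV, coeff_X]
  | 2 => simp [majorantV, coeff_X_pow]; positivity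
  | i + 3 => rw [coeff_majorantV_add_three]; split <;> positivity

theorem coeff_majorantV_succ_le (hH0 : 0 ≤ H0) (hH : 0 ≤ H) (i : ℕ) :
    (majorantV p H0 H).coeff (i + 1) ≤ H0 * majorantWeight H i := by
  match i with
  | 0 => simp [majorantV, majorantWeight]
  | 1 => simp [majorantV, coeff_X_pow, majorantWeight]; linarith
  | i + 2 =>
    rw [coeff_majorantV_add_three, majorantWeight.add_two, mul_div_assoc]
    split
    · gcongr
      nlinarith
    · exact mul_nonneg hH0 (by positivity)


theorem coeff_X_add_C_mul_majorantV_succ_le (ha : 0 ≤ a) (hH0 : 0 ≤ H0) (hH : 0 ≤ H) (i : ℕ) :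
    (X + C a * majorantV p H0 H).coeff (i + 1) ≤ (1 + a * H0) * majorantWeight H i := by
  have hX : (X : ℝ[X]).coeff (i + 1) ≤ majorantWeight H i := by
    rcases i with _ | i
    · simp [majorantWeight]
    · rw [coeff_X_of_ne_one (by omega)]; exact majorantWeight.nonneg hH _
  rw [coeff_add, coeff_C_mul, add_mul, mul_assoc, one_mul]
  gcongr
  exact coeff_majorantV_succ_le hH0 hH i

theorem coeff_X_add_C_mul_majorantV_nonneg (ha : 0 ≤ a) (hH0 : 0 ≤ H0) (hH : 0 ≤ H) (i : ℕ) :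
    0 ≤ (X + C a * majorantV p H0 H).coeff i := by
  rw [coeff_add, coeff_C_mul, coeff_X]
  have := coeff_majorantV_nonneg (p := p) hH0 hH i
  positivity

end majorantV

theorem majorant_power_estimate_general (n p : ℕ) (H0 H : ℝ) (hH0 : 1 ≤ H0) (hH : 1 ≤ H) :
    ∀ k : ℕ, 1 ≤ k → k ≤ p → ∀ s : ℕ, k ≤ s → s ≤ p →
      ((Polynomial.X + Polynomial.C (1 + (n : ℝ)) * majorantV p H0 H) ^ k).coeff s ≤
        (4 * Real.pi ^ 2 / 3) ^ (k - 1) * (1 + (1 + (n : ℝ)) * H0) ^ k *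
          (if s ≤ k + 1 then 1 else H ^ (s - k - 2) / (((s : ℝ) - (k : ℝ)) ^ 2)) := by
  intro k hk _ s hks _
  obtain ⟨k, rfl⟩ : ∃ j, k = j + 1 := ⟨k - 1, by omega⟩
  obtain ⟨m, rfl⟩ := Nat.exists_eq_add_of_le hks
  have hn : (0 : ℝ) ≤ 1 + n := by positivity
  have hH0' : 0 ≤ H0 := by linarith
  have hH' : 0 ≤ H := by linarith
  have hP0 : (X + C (1 + (n : ℝ)) * majorantV p H0 H).coeff 0 = 0 := by
    simp [coeff_majorantV_zero]
  rw [ite_eq_majorantWeight, coeff_pow_add_eq_coeff_divX_pow hP0, Nat.add_sub_cancel]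
  refine coeff_pow_succ_le_of_coeff_le (by positivity) (by positivity) (fun i ↦ ?_) (fun i ↦ ?_)
    (sum_antidiagonal_majorantWeight_mul_le hH) k m <;> rw [coeff_divX]
  · exact coeff_X_add_C_mul_majorantV_nonneg hn hH0' hH' _
  · exact coeff_X_add_C_mul_majorantV_succ_le hn hH0' hH' i

/-- Majorant power estimate: with `c = 4π²/3`, for every `1 ≤ k ≤ p`, the coefficient of
`ξ^s` (for `k ≤ s ≤ p`) in `(ξ + (1+n)v(ξ))^k` is at most
`c^{k-1} (1+(1+n)H₀)^k` times (`1` if `s = k` or `s = k+1`, and `H^{s-k-2}/(s-k)²`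
if `k+2 ≤ s ≤ p`). -/
theorem majorant_power_estimate (n p : ℕ) (H0 H : ℝ) (hH0 : 1 ≤ H0) (hH : 1 ≤ H)
    (hp : 2 ≤ p) (hn : 1 ≤ n) :
    ∀ k : ℕ, 1 ≤ k → k ≤ p → ∀ s : ℕ, k ≤ s → s ≤ p →
      ((Polynomial.X + Polynomial.C (1 + (n : ℝ)) * majorantV p H0 H) ^ k).coeff s ≤
        (4 * Real.pi ^ 2 / 3) ^ (k - 1) * (1 + (1 + (n : ℝ)) * H0) ^ k *
          (if s ≤ k + 1 then 1 else H ^ (s - k - 2) / (((s : ℝ) - (k : ℝ)) ^ 2)) :=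
  majorant_power_estimate_general n p H0 H hH0 hH
end

section
/- (Vanishing Taylor coefficients from symmetry) Let w : cl(B²_1(0)) → R be C^{2q} and suppose that (i) Σ_{l=0}^{q-1} w(re^{i(θ+2πl/q)}) = 0 for all r ∈ [0,1], θ; (ii) w(re^{i(θ+2π/k)}) = w(re^{iθ}) for all r, θ, where k > q and gcd(k,q) = 1; and (iii) the degree 2q−1 Taylor polynomial of w at 0 is harmonic, hence of the form Re(Σ_{j=0}^{2q-1} c_j (ξ_1+iξ_2)^j) with c_j ∈ C. Then c_j = 0 for j = 0,1,...,q. Consequently |w(ξ)| ≤ sup_{B₁} |D^{q+1}w| · |ξ|^{q+1} for ξ ∈ B²_1(0). -/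
open Complex Asymptotics
open scoped Real BigOperators Topology

/-
Rotation by `ζ = e^{2πi/k}` preserves `w` near `0`, so the Taylor polynomial `P = ∑ c_j z^j`
satisfies `Re (P (ζ z) - P z) = o(|z|^{2q-1})`. On each ray `z = r e^{iθ}` this is a real
polynomial in `r` that is `o(r^{2q-1})`, hence zero; varying `θ` gives `c_j (ζ^j - 1) = 0`, and
`ζ^j ≠ 1` for `0 < j < k`, so `c_j = 0` for `1 ≤ j ≤ q`. Condition (i) at `r = 0` gives
`Re c_0 = w 0 = 0`. Consequently `w = o(|z|^q)`, so on each segment `t ↦ w (t ξ)` the Taylor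
polynomial of order `q` at `0` vanishes, and the Lagrange remainder bound gives the estimate.
-/

open Set Filter Metric
open scoped Nat

section

variable {E : Type*} [NormedAddCommGroup E] [NormedSpace ℝ E]

theorem coeff_zero_eq_zero_of_sum_mul_pow_isLittleO {n : ℕ} {a : ℕ → ℝ}
    (h : (fun r : ℝ => ∑ j ∈ Finset.range (n + 1), a j * r ^ j) =o[𝓝[>] 0] fun r => r ^ n) :
    a 0 = 0 := by
  have hlim : Tendsto (fun r : ℝ => ∑ j ∈ Finset.range (n + 1), a j * r ^ j) (𝓝[>] 0)
      (𝓝 (a 0)) := by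
    have hcont : Continuous fun r : ℝ => ∑ j ∈ Finset.range (n + 1), a j * r ^ j := by fun_prop
    simpa [Finset.sum_range_succ'] using (hcont.tendsto 0).mono_left nhdsWithin_le_nhds
  have hpow : (fun r : ℝ => r ^ n) =O[𝓝[>] 0] fun _ => (1 : ℝ) :=
    (((continuous_pow n).tendsto 0).mono_left nhdsWithin_le_nhds).isBigO_one ℝ
  exact tendsto_nhds_unique hlim ((isLittleO_one_iff ℝ).1 (h.trans_isBigO hpow))

theorem eq_zero_of_sum_mul_pow_isLittleO {n : ℕ} {a : ℕ → ℝ}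
    (h : (fun r : ℝ => ∑ j ∈ Finset.range (n + 1), a j * r ^ j) =o[𝓝[>] 0] fun r => r ^ n) :
    ∀ j ≤ n, a j = 0 := by
  induction n generalizing a with
  | zero =>
    intro j hj
    obtain rfl : j = 0 := by omega
    exact coeff_zero_eq_zero_of_sum_mul_pow_isLittleO h
  | succ n ih =>
    have ha₀ := coeff_zero_eq_zero_of_sum_mul_pow_isLittleO h
    have hshift : (fun r : ℝ => ∑ j ∈ Finset.range (n + 1), a (j + 1) * r ^ j)
        =o[𝓝[>] 0] fun r => r ^ n := by
      refine ((isBigO_refl (fun r : ℝ => r⁻¹) _).mul_isLittleO h).congr' ?_ ?_ <;>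
        filter_upwards [self_mem_nhdsWithin] with r (hr : 0 < r)
      · rw [Finset.sum_range_succ' _ (n + 1), ha₀, zero_mul, add_zero, Finset.mul_sum]
        exact Finset.sum_congr rfl fun j _ => by field_simp; ring
      · rw [pow_succ']
        field_simp
    rintro (_ | j) hj
    · exact ha₀
    · exact ih hshift j (by omega)

theorem Asymptotics.IsLittleO.comp_smul_const {F : Type*} [NormedAddCommGroup F] {f : E → F}
    {n : ℕ} (hf : f =o[𝓝 0] fun x => ‖x‖ ^ n) (v : E) :
    (fun r : ℝ => f (r • v)) =o[𝓝 0] fun r => r ^ n := by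
  have hlim : Tendsto (fun r : ℝ => r • v) (𝓝 0) (𝓝 0) :=
    (continuous_id.smul continuous_const).tendsto' 0 0 (zero_smul ℝ v)
  refine (hf.comp_tendsto hlim).trans_isBigO (IsBigO.of_bound (‖v‖ ^ n) ?_)
  filter_upwards with r
  simp [norm_smul, mul_pow, mul_comm]

theorem re_sum_mul_ofReal_mul_pow (b : ℕ → ℂ) (m : ℕ) (v : ℂ) (r : ℝ) :
    (∑ j ∈ Finset.range m, b j * (r * v) ^ j).re
      = ∑ j ∈ Finset.range m, (b j * v ^ j).re * r ^ j := by
  rw [re_sum]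
  refine Finset.sum_congr rfl fun j _ => ?_
  rw [mul_pow, ← ofReal_pow, mul_left_comm, re_ofReal_mul, mul_comm]

theorem eq_zero_of_forall_re_mul_exp_pow_eq_zero {A : ℂ} {j : ℕ} (hj : j ≠ 0)
    (h : ∀ θ : ℝ, (A * exp (θ * I) ^ j).re = 0) : A = 0 := by
  have hI : exp ((π / (2 * j) : ℝ) * I) ^ j = I := by
    have hangle : (j : ℂ) * ((π / (2 * j) : ℝ) * I) = π / 2 * I := by
      push_cast
      field_simp
    rw [← exp_nat_mul, hangle, exp_pi_div_two_mul_I]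
  have hre : A.re = 0 := by simpa using h 0
  have him : A.im = 0 := by
    have h' := h (π / (2 * j))
    rw [hI, mul_I_re] at h'
    simpa using h'
  exact Complex.ext hre him

theorem eq_zero_of_re_sum_mul_pow_isLittleO {n : ℕ} {b : ℕ → ℂ}
    (h : (fun z : ℂ => (∑ j ∈ Finset.range (n + 1), b j * z ^ j).re) =o[𝓝 0]
      fun z => ‖z‖ ^ n)
    {j : ℕ} (hj₀ : j ≠ 0) (hjn : j ≤ n) : b j = 0 := by
  refine eq_zero_of_forall_re_mul_exp_pow_eq_zero hj₀ fun θ => ?_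
  have hray := (h.comp_smul_const (exp (θ * I))).mono (nhdsWithin_le_nhds (s := Ioi 0))
  simp only [real_smul, re_sum_mul_ofReal_mul_pow] at hray
  exact eq_zero_of_sum_mul_pow_isLittleO hray j hjn

theorem apply_exp_mul_eq_of_forall_polar {f : ℂ → ℝ} {α : ℝ}
    (h : ∀ r θ : ℝ, 0 ≤ r → r ≤ 1 →
      f (r * exp ((θ + α : ℝ) * I)) = f (r * exp ((θ : ℝ) * I)))
    {z : ℂ} (hz : z ∈ closedBall 0 1) : f (exp (α * I) * z) = f z := by
  have hpolar := h ‖z‖ (arg z) (norm_nonneg z) (mem_closedBall_zero_iff.1 hz)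
  have hexp : exp ((arg z + α : ℝ) * I) = exp (α * I) * exp (arg z * I) := by
    rw [← exp_add]
    push_cast
    ring_nf
  rwa [hexp, mul_left_comm, norm_mul_exp_arg_mul_I] at hpolar

theorem re_sum_rotate_sub_isLittleO {f : ℂ → ℝ} {b : ℕ → ℂ} {m n : ℕ} {ζ : ℂ} (hζ : ‖ζ‖ = 1)
    (hf : ∀ᶠ z in 𝓝 0, f (ζ * z) = f z)
    (h : (fun z => f z - (∑ j ∈ Finset.range m, b j * z ^ j).re) =o[𝓝 0] fun z => ‖z‖ ^ n) :
    (fun z => (∑ j ∈ Finset.range m, b j * (ζ ^ j - 1) * z ^ j).re) =o[𝓝 0]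
      fun z => ‖z‖ ^ n := by
  have hlim : Tendsto (fun z => ζ * z) (𝓝 0) (𝓝 0) :=
    (continuous_const_mul ζ).tendsto' 0 0 (mul_zero ζ)
  have hrot : (fun z => f (ζ * z) - (∑ j ∈ Finset.range m, b j * (ζ * z) ^ j).re)
      =o[𝓝 0] fun z => ‖z‖ ^ n :=
    (h.comp_tendsto hlim).congr_right fun z => by simp [hζ]
  refine (h.sub hrot).congr' ?_ EventuallyEq.rfl
  filter_upwards [hf] with z hz
  rw [hz, sub_sub_sub_cancel_left, ← sub_re, ← Finset.sum_sub_distrib]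
  congr 1
  exact Finset.sum_congr rfl fun j _ => by ring

theorem apply_zero_eq_re_of_sub_re_sum_isLittleO {f : ℂ → ℝ} {b : ℕ → ℂ} {m n : ℕ} (hm : m ≠ 0)
    (hn : n ≠ 0)
    (h : (fun z => f z - (∑ j ∈ Finset.range m, b j * z ^ j).re) =o[𝓝 0] fun z => ‖z‖ ^ n) :
    f 0 = (b 0).re := by
  have hP₀ : ∑ j ∈ Finset.range m, b j * 0 ^ j = b 0 := by
    rw [Finset.sum_eq_single 0 (fun j _ hj => by simp [hj]) (by simp [hm])]
    simp
  have h₀ : f 0 - (∑ j ∈ Finset.range m, b j * 0 ^ j).re = 0 :=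
    (h.isBigO.congr_right fun z => by rw [sub_zero]).eq_zero_of_norm_pow hn
  rwa [hP₀, sub_eq_zero] at h₀

theorem isLittleO_of_sub_re_sum_isLittleO {f : ℂ → ℝ} {b : ℕ → ℂ} {m n q : ℕ} (hqn : q ≤ n)
    (hb : ∀ j ≤ q, b j = 0)
    (h : (fun z => f z - (∑ j ∈ Finset.range m, b j * z ^ j).re) =o[𝓝 0] fun z => ‖z‖ ^ n) :
    f =o[𝓝 0] fun z => ‖z‖ ^ q := by
  have hpoly : (fun z => (∑ j ∈ Finset.range m, b j * z ^ j).re) =o[𝓝 0] fun z => ‖z‖ ^ q := by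
    simp only [re_sum]
    refine IsLittleO.fun_sum fun j _ => ?_
    rcases le_or_gt j q with hjq | hqj
    · simp [hb j hjq]
    · refine IsBigO.trans_isLittleO ?_ (isLittleO_norm_pow_norm_pow hqj)
      refine IsBigO.of_bound ‖b j‖ (Eventually.of_forall fun z => ?_)
      simpa using abs_re_le_norm (b j * z ^ j)
  have hrem : (fun z : ℂ => ‖z‖ ^ n) =O[𝓝 0] fun z => ‖z‖ ^ q := by
    rcases hqn.eq_or_lt with rfl | hlt
    · exact isBigO_refl _ _
    · exact (isLittleO_norm_pow_norm_pow hlt).isBigO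
  exact ((h.trans_isBigO hrem).add hpoly).congr_left fun z => sub_add_cancel _ _

theorem taylorWithinEval_eq_zero_of_isLittleO {g : ℝ → ℝ} {n : ℕ}
    (hg : ContDiffOn ℝ n g (Icc 0 1)) (hsmall : g =o[𝓝[>] 0] fun t => t ^ n) (x : ℝ) :
    taylorWithinEval g n (Icc 0 1) 0 x = 0 := by
  have hfilter : 𝓝[>] (0 : ℝ) ≤ 𝓝[Icc 0 1] 0 := nhdsWithin_le_of_mem (Icc_mem_nhdsGT one_pos)
  have hrem := (taylor_isLittleO (convex_Icc 0 1) ⟨le_rfl, zero_le_one⟩ hg).mono hfilter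
  have hcoeff := eq_zero_of_sum_mul_pow_isLittleO (n := n)
    (a := fun j => (j ! : ℝ)⁻¹ * iteratedDerivWithin j g (Icc 0 1) 0)
    ((hsmall.sub (by simpa using hrem)).congr_left fun t => by
      simp [taylor_within_apply, mul_right_comm])
  rw [taylor_within_apply]
  refine Finset.sum_eq_zero fun j hj => ?_
  rw [smul_eq_mul, mul_right_comm, hcoeff j (Nat.lt_succ_iff.1 (Finset.mem_range.1 hj)),
    zero_mul]

theorem mapsTo_smul_Icc_closedBall {ξ : E} (hξ : ‖ξ‖ ≤ 1) :
    MapsTo (fun t : ℝ => t • ξ) (Icc 0 1) (closedBall 0 1) := fun t ht => by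
  simpa [norm_smul, abs_of_nonneg ht.1] using mul_le_one₀ ht.2 (norm_nonneg ξ) hξ

theorem norm_iteratedDerivWithin_comp_smul_le {w : E → ℝ} {n : ℕ} {M : ℝ} {ξ : E}
    (hw : ContDiffOn ℝ n w (closedBall 0 1))
    (hM : ∀ x ∈ closedBall (0 : E) 1, ‖iteratedFDerivWithin ℝ n w (closedBall 0 1) x‖ ≤ M)
    (hξ : ‖ξ‖ ≤ 1) {t : ℝ} (ht : t ∈ Icc (0 : ℝ) 1) :
    ‖iteratedDerivWithin n (fun t : ℝ => w (t • ξ)) (Icc 0 1) t‖ ≤ M * ‖ξ‖ ^ n := by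
  set L : ℝ →L[ℝ] E := ContinuousLinearMap.toSpanSingleton ℝ ξ
  have hIcc : Icc 0 1 ⊆ L ⁻¹' closedBall 0 1 := mapsTo_smul_Icc_closedBall hξ
  have hball : UniqueDiffOn ℝ (closedBall (0 : E) 1) :=
    uniqueDiffOn_convex (convex_closedBall 0 1)
      ⟨0, mem_interior_iff_mem_nhds.2 (closedBall_mem_nhds 0 one_pos)⟩
  have hpre : UniqueDiffOn ℝ (L ⁻¹' closedBall 0 1) :=
    uniqueDiffOn_convex ((convex_closedBall 0 1).linear_preimage L.toLinearMap)
      ⟨1 / 2, interior_mono hIcc (by rw [interior_Icc]; norm_num)⟩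
  have hcomp : iteratedDerivWithin n (w ∘ L) (Icc 0 1) t
      = iteratedFDerivWithin ℝ n w (closedBall 0 1) (t • ξ) (fun _ => ξ) := by
    rw [iteratedDerivWithin_eq_iteratedFDerivWithin,
      iteratedFDerivWithin_subset hIcc uniqueDiffOn_Icc_zero_one hpre
        (hw.comp L.contDiff.contDiffOn Subset.rfl) ht,
      L.iteratedFDerivWithin_comp_right hw hball hpre (hIcc ht) le_rfl]
    simp [L]
  calc ‖iteratedDerivWithin n (w ∘ L) (Icc 0 1) t‖
      ≤ ‖iteratedFDerivWithin ℝ n w (closedBall 0 1) (t • ξ)‖ * ∏ _i : Fin n, ‖ξ‖ := by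
        rw [hcomp]
        exact ContinuousMultilinearMap.le_opNorm _ _
    _ ≤ M * ‖ξ‖ ^ n := by
        rw [Finset.prod_const, Finset.card_univ, Fintype.card_fin]
        gcongr
        exact hM _ (hIcc ht)

theorem abs_le_of_isLittleO_of_norm_iteratedFDerivWithin_le {w : E → ℝ} {q : ℕ} {M : ℝ}
    (hw : ContDiffOn ℝ (q + 1) w (closedBall 0 1)) (hsmall : w =o[𝓝 0] fun x => ‖x‖ ^ q)
    (hM : ∀ x ∈ closedBall (0 : E) 1,
      ‖iteratedFDerivWithin ℝ (q + 1) w (closedBall 0 1) x‖ ≤ M)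
    {ξ : E} (hξ : ‖ξ‖ ≤ 1) : |w ξ| ≤ M * ‖ξ‖ ^ (q + 1) := by
  have hg : ContDiffOn ℝ (q + 1) (fun t : ℝ => w (t • ξ)) (Icc 0 1) :=
    hw.comp (contDiff_id.smul contDiff_const).contDiffOn (mapsTo_smul_Icc_closedBall hξ)
  have htaylor := taylorWithinEval_eq_zero_of_isLittleO (hg.of_le (by norm_cast; omega))
    ((hsmall.comp_smul_const ξ).mono nhdsWithin_le_nhds) 1
  have hM₀ : 0 ≤ M := (norm_nonneg _).trans (hM 0 (mem_closedBall_self zero_le_one))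
  have hrem := taylor_mean_remainder_bound zero_le_one hg (right_mem_Icc.2 zero_le_one)
    fun t ht => norm_iteratedDerivWithin_comp_smul_le hw hM hξ ht
  rw [htaylor, sub_zero, one_smul, sub_zero, one_pow, mul_one, Real.norm_eq_abs] at hrem
  exact hrem.trans (div_le_self (by positivity) (by exact_mod_cast q.factorial_pos))

end

theorem taylor_coefficients_vanish_general (q k : ℕ) (hq : 1 ≤ q) (hk : q < k)
    (w : ℂ → ℝ)
    (hw : ContDiffOn ℝ (2 * q) w (Metric.closedBall 0 1))
    (hi : ∀ r θ : ℝ, 0 ≤ r → r ≤ 1 →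
      ∑ l ∈ Finset.range q,
        w ((r : ℂ) * Complex.exp (((θ + 2 * π * (l : ℝ) / (q : ℝ) : ℝ) : ℂ) * Complex.I)) = 0)
    (hii : ∀ r θ : ℝ, 0 ≤ r → r ≤ 1 →
      w ((r : ℂ) * Complex.exp (((θ + 2 * π / (k : ℝ) : ℝ) : ℂ) * Complex.I)) =
        w ((r : ℂ) * Complex.exp (((θ : ℝ) : ℂ) * Complex.I)))
    (c : ℕ → ℂ) (hc0 : (c 0).im = 0)
    (hTaylor :
      (fun z : ℂ => w z - (∑ j ∈ Finset.range (2 * q), c j * z ^ j).re)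
        =o[𝓝 0] fun z : ℂ => ‖z‖ ^ (2 * q - 1)) :
    (∀ j ≤ q, c j = 0) ∧
    ∀ M : ℝ,
      (∀ x ∈ Metric.closedBall (0 : ℂ) 1,
        ‖iteratedFDerivWithin ℝ (q + 1) w (Metric.closedBall 0 1) x‖ ≤ M) →
      ∀ ξ ∈ Metric.ball (0 : ℂ) 1, |w ξ| ≤ M * ‖ξ‖ ^ (q + 1) := by
  set n := 2 * q - 1
  set ζ : ℂ := exp ((2 * π / k : ℝ) * I)
  have hζ : IsPrimitiveRoot ζ k := by
    convert isPrimitiveRoot_exp k (by omega) using 2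
    push_cast
    ring
  have hw₀ : w 0 = 0 := by simpa [show q ≠ 0 by omega] using hi 0 0 le_rfl zero_le_one
  have hc₀ : c 0 = 0 := Complex.ext
    (by rw [← apply_zero_eq_re_of_sub_re_sum_isLittleO (by omega) (by omega) hTaylor, hw₀, zero_re]) hc0
  have hrot : ∀ᶠ z in 𝓝 0, w (ζ * z) = w z :=
    eventually_of_mem (closedBall_mem_nhds 0 one_pos) fun _ =>
      apply_exp_mul_eq_of_forall_polar hii
  have hcoeff : ∀ j ≤ q, c j = 0 := by
    rintro (_ | j) hj
    · exact hc₀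
    · have hdiff := re_sum_rotate_sub_isLittleO (hζ.norm'_eq_one (by omega)) hrot hTaylor
      rw [show 2 * q = n + 1 by omega] at hdiff
      have hζj : ζ ^ (j + 1) ≠ 1 := hζ.pow_ne_one_of_pos_of_lt j.succ_ne_zero (by omega)
      exact (mul_eq_zero.1 (eq_zero_of_re_sum_mul_pow_isLittleO hdiff j.succ_ne_zero
        (by omega))).resolve_right (sub_ne_zero.2 hζj)
  refine ⟨hcoeff, fun M hM ξ hξ => ?_⟩
  exact abs_le_of_isLittleO_of_norm_iteratedFDerivWithin_le (hw.of_le (by norm_cast; omega))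
    (isLittleO_of_sub_re_sum_isLittleO (by omega) hcoeff hTaylor) hM (mem_ball_zero_iff.1 hξ).le

/-- Vanishing Taylor coefficients from symmetry: if `w : cl(B²₁(0)) → ℝ` is `C^{2q}`,
(i) `∑_{l=0}^{q-1} w(re^{i(θ+2πl/q)}) = 0`, (ii) `w(re^{i(θ+2π/k)}) = w(re^{iθ})` with
`k > q`, `gcd(k,q) = 1`, and (iii) the degree `2q-1` Taylor polynomial of `w` at `0`
is harmonic, of the form `Re(∑_{j<2q} c_j z^j)` (normalized so that `c₀` is real), then
`c_j = 0` for `j = 0,…,q`; consequently `|w(ξ)| ≤ sup_{B₁} |D^{q+1} w| · |ξ|^{q+1}`. -/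
theorem taylor_coefficients_vanish (q k : ℕ) (hq : 1 ≤ q) (hk : q < k)
    (hcop : Nat.Coprime k q) (w : ℂ → ℝ)
    (hw : ContDiffOn ℝ (2 * q) w (Metric.closedBall 0 1))
    (hi : ∀ r θ : ℝ, 0 ≤ r → r ≤ 1 →
      ∑ l ∈ Finset.range q,
        w ((r : ℂ) * Complex.exp (((θ + 2 * π * (l : ℝ) / (q : ℝ) : ℝ) : ℂ) * Complex.I)) = 0)
    (hii : ∀ r θ : ℝ, 0 ≤ r → r ≤ 1 →
      w ((r : ℂ) * Complex.exp (((θ + 2 * π / (k : ℝ) : ℝ) : ℂ) * Complex.I)) =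
        w ((r : ℂ) * Complex.exp (((θ : ℝ) : ℂ) * Complex.I)))
    (c : ℕ → ℂ) (hc0 : (c 0).im = 0)
    (hTaylor :
      (fun z : ℂ => w z - (∑ j ∈ Finset.range (2 * q), c j * z ^ j).re)
        =o[𝓝 0] fun z : ℂ => ‖z‖ ^ (2 * q - 1)) :
    (∀ j ≤ q, c j = 0) ∧
    ∀ M : ℝ,
      (∀ x ∈ Metric.closedBall (0 : ℂ) 1,
        ‖iteratedFDerivWithin ℝ (q + 1) w (Metric.closedBall 0 1) x‖ ≤ M) →
      ∀ ξ ∈ Metric.ball (0 : ℂ) 1, |w ξ| ≤ M * ‖ξ‖ ^ (q + 1) :=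
  taylor_coefficients_vanish_general q k hq hk w hw hi hii c hc0 hTaylor
end
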